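/- arXiv:1104.5277 — 3 statements merged into one kernel-verified Lean document; each statement's English description precedes it below -/
import Mathlib

section
/- Let K^λ, λ ∈ [0,1), be a family of bounded selfadjoint operators on L²(𝕋^d) with sup_λ ‖K^λ‖ < ∞ and K^λ → K^σ strongly as λ → σ for each σ ∈ [0,1). Set A^λ = −Δ + K^λ, A = A⁰, and let P_n be the orthogonal projection onto the first n eigenvectors of A; define A_n^λ = P_n A^λ P_n. If σ belongs to the resolvent set of A, then there exist N > 0 and λ* > 0 such that σ belongs to the resolvent set of A_n^λ for all n > N and all 0 < λ < λ*. -/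
/-!
A kernel vector `x` of `A_n^λ - σ` gives `u = ∑ x_j v_j` with `‖u‖² = ∑ x_j²` and
`(σ - α_j) x_j = ⟪(K^λ - K⁰) u, v_j⟫`. Choose `N` with `α_j ≥ σ + 4C + 1` for `j ≥ N`, where
`C` bounds `‖K^λ‖`: Bessel's inequality then puts at most `‖u‖² / 4` of `∑ x_j²` on the modes
`j ≥ N`. On the finitely many modes `j < N` the gap `|σ - α_j| ≥ δ > 0` is fixed, and moving
`K^λ - K⁰` onto `v_j` by self-adjointness, strong continuity makes `∑_{j<N} ‖(K^λ - K⁰) v_j‖²`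
small for small `λ`, so these modes also carry at most `‖u‖² / 4`. Hence `u = 0` and `x = 0`.
-/

open Filter Topology

/-- The truncated operator `A_n^λ = P_n A^λ P_n`, expressed as an `n × n` matrix in
the orthonormal eigenbasis `v` of `A = A⁰` (with ascending eigenvalues `α`):
`A^λ = A⁰ + (K^λ − K⁰)`, so the matrix entries are
`α_i δ_{ij} + ⟪(K^λ − K⁰) v_j, v_i⟫`. -/
noncomputable def truncMat {H : Type*} [NormedAddCommGroup H] [InnerProductSpace ℝ H]
    (v : ℕ → H) (α : ℕ → ℝ) (K : ℝ → H →L[ℝ] H) (l : ℝ) (n : ℕ) :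
    Matrix (Fin n) (Fin n) ℝ :=
  Matrix.of fun i j =>
    (if (i : ℕ) = (j : ℕ) then α i else 0) + (inner ℝ ((K l - K 0) (v j)) (v i) : ℝ)

open Finset

lemma sq_mul_sum_sq_le_sum_mul_sq {ι : Type*} (s : Finset ι) {c : ℝ} {d x : ι → ℝ} (hc : 0 ≤ c)
    (hd : ∀ i ∈ s, c ≤ |d i|) : c ^ 2 * ∑ i ∈ s, x i ^ 2 ≤ ∑ i ∈ s, (d i * x i) ^ 2 := by
  rw [mul_sum]
  refine sum_le_sum fun i hi => ?_
  rw [mul_pow, ← sq_abs (d i)]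
  gcongr
  exact hd i hi

section Orthonormal

variable {ι H : Type*} [NormedAddCommGroup H] [InnerProductSpace ℝ H] {w : ι → H} {d x : ι → ℝ}
  {s : Finset ι} {c : ℝ}

lemma Orthonormal.sq_mul_sum_sq_le_norm_sq (hw : Orthonormal ℝ w) {y : H} (hc : 0 ≤ c)
    (hd : ∀ i ∈ s, c ≤ |d i|) (hx : ∀ i ∈ s, d i * x i = inner ℝ y (w i)) :
    c ^ 2 * ∑ i ∈ s, x i ^ 2 ≤ ‖y‖ ^ 2 :=
  calc c ^ 2 * ∑ i ∈ s, x i ^ 2 ≤ ∑ i ∈ s, (d i * x i) ^ 2 := sq_mul_sum_sq_le_sum_mul_sq s hc hd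
    _ = ∑ i ∈ s, ‖inner ℝ (w i) y‖ ^ 2 :=
      sum_congr rfl fun i hi => by rw [hx i hi, Real.norm_eq_abs, sq_abs, real_inner_comm]
    _ ≤ ‖y‖ ^ 2 := hw.sum_inner_products_le y

lemma LinearMap.IsSymmetric.sq_mul_sum_sq_le_norm_sq_mul_sum {D : H →ₗ[ℝ] H}
    (hD : D.IsSymmetric) {u : H} (hc : 0 ≤ c) (hd : ∀ i ∈ s, c ≤ |d i|)
    (hx : ∀ i ∈ s, d i * x i = inner ℝ (D u) (w i)) :
    c ^ 2 * ∑ i ∈ s, x i ^ 2 ≤ ‖u‖ ^ 2 * ∑ i ∈ s, ‖D (w i)‖ ^ 2 :=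
  calc c ^ 2 * ∑ i ∈ s, x i ^ 2 ≤ ∑ i ∈ s, (d i * x i) ^ 2 := sq_mul_sum_sq_le_sum_mul_sq s hc hd
    _ ≤ ∑ i ∈ s, (‖u‖ * ‖D (w i)‖) ^ 2 := by
      refine sum_le_sum fun i hi => ?_
      rw [hx i hi, hD u, ← sq_abs]
      gcongr
      exact abs_real_inner_le_norm _ _
    _ = ‖u‖ ^ 2 * ∑ i ∈ s, ‖D (w i)‖ ^ 2 := by simp only [mul_pow, mul_sum]

theorem Orthonormal.eq_zero_of_mul_eq_inner_sum [Fintype ι] [DecidableEq ι]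
    (hw : Orthonormal ℝ w) {D : H →L[ℝ] H} (hD : (D : H →ₗ[ℝ] H).IsSymmetric)
    (hx : ∀ i, d i * x i = inner ℝ (D (∑ j, x j • w j)) (w i)) (s : Finset ι) {δ : ℝ}
    (hδ : 0 < δ) (hlow : ∀ i ∈ s, δ ≤ |d i|) (hsmall : ∑ i ∈ s, ‖D (w i)‖ ^ 2 ≤ δ ^ 2 / 4)
    (hc : 0 < c) (hDc : 2 * ‖D‖ ≤ c) (hhigh : ∀ i ∈ sᶜ, c ≤ |d i|) : x = 0 := by
  set u := ∑ j, x j • w j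
  have hu : ‖u‖ ^ 2 = ∑ i, x i ^ 2 := by
    rw [← real_inner_self_eq_norm_sq, hw.inner_sum]
    simp only [conj_trivial, sq]
  have hsum_low : ∑ i ∈ s, x i ^ 2 ≤ ‖u‖ ^ 2 / 4 := by
    have h := hD.sq_mul_sum_sq_le_norm_sq_mul_sum hδ.le hlow fun i _ => hx i
    simp only [ContinuousLinearMap.coe_coe] at h
    have : δ ^ 2 * ∑ i ∈ s, x i ^ 2 ≤ δ ^ 2 * (‖u‖ ^ 2 / 4) := by
      nlinarith [mul_le_mul_of_nonneg_left hsmall (sq_nonneg ‖u‖)]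
    exact le_of_mul_le_mul_left this (by positivity)
  have hsum_high : ∑ i ∈ sᶜ, x i ^ 2 ≤ ‖u‖ ^ 2 / 4 := by
    have h := hw.sq_mul_sum_sq_le_norm_sq hc.le hhigh fun i _ => hx i
    have hDu : ‖D u‖ ≤ c / 2 * ‖u‖ := D.le_of_opNorm_le (by linarith) u
    have : c ^ 2 * ∑ i ∈ sᶜ, x i ^ 2 ≤ c ^ 2 * (‖u‖ ^ 2 / 4) := by
      nlinarith [pow_le_pow_left₀ (norm_nonneg _) hDu 2]
    exact le_of_mul_le_mul_left this (by positivity)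
  have hu0 : u = 0 := by
    rw [← norm_eq_zero, ← sq_eq_zero_iff]
    linarith [sum_add_sum_compl s fun i => x i ^ 2, sq_nonneg ‖u‖]
  exact funext <| Fintype.linearIndependent_iff.1 hw.linearIndependent x hu0

end Orthonormal

lemma exists_pos_le_abs_sub_of_notMem_range {α : ℕ → ℝ} {σ : ℝ} (hσ : σ ∉ Set.range α) (N : ℕ) :
    ∃ δ > 0, ∀ k < N, δ ≤ |σ - α k| := by
  have h : ∀ᶠ δ in 𝓝[>] (0 : ℝ), ∀ k ∈ range N, δ ≤ |σ - α k| :=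
    (eventually_all_finset _).2 fun k _ => nhdsWithin_le_nhds <|
      eventually_le_nhds (abs_pos.2 (sub_ne_zero.2 fun h => hσ ⟨k, h.symm⟩))
  obtain ⟨δ, hδ, hδ0⟩ := (h.and self_mem_nhdsWithin).exists
  exact ⟨δ, hδ0, fun k hk => hδ k (mem_range.2 hk)⟩

lemma exists_forall_Ioo_sum_norm_sq_sub_apply_le {H : Type*} [NormedAddCommGroup H]
    [NormedSpace ℝ H] {K : ℝ → H →L[ℝ] H} (hK : ∀ u, Tendsto (fun l => K l u) (𝓝[>] 0) (𝓝 (K 0 u)))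
    (v : ℕ → H) (N : ℕ) {ε : ℝ} (hε : 0 < ε) :
    ∃ lstar > 0, ∀ l ∈ Set.Ioo 0 lstar, ∑ k ∈ range N, ‖(K l - K 0) (v k)‖ ^ 2 ≤ ε := by
  have h : Tendsto (fun l => ∑ k ∈ range N, ‖(K l - K 0) (v k)‖ ^ 2) (𝓝[>] 0) (𝓝 0) := by
    rw [← sum_const_zero (s := range N)]
    refine tendsto_finsetSum _ fun k _ => ?_
    simpa using ((hK (v k)).sub_const (K 0 (v k))).norm.pow 2
  exact mem_nhdsGT_iff_exists_Ioo_subset.1 (h.eventually (eventually_le_nhds hε))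

lemma Fin.sum_filter_val_lt_le_sum_range {n N : ℕ} {f : ℕ → ℝ} (hf : ∀ k, 0 ≤ f k) :
    ∑ i ∈ univ.filter (fun i : Fin n => (i : ℕ) < N), f i ≤ ∑ k ∈ range N, f k := by
  calc ∑ i ∈ univ.filter (fun i : Fin n => (i : ℕ) < N), f i
      = ∑ k ∈ (univ.filter (fun i : Fin n => (i : ℕ) < N)).map Fin.valEmbedding, f k := by
        rw [sum_map]; rfl
    _ ≤ ∑ k ∈ range N, f k := sum_le_sum_of_subset_of_nonneg ?_ fun k _ _ => hf k
  intro k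
  simp only [Finset.mem_map, mem_filter, mem_range, Fin.valEmbedding_apply]
  rintro ⟨i, ⟨-, hi⟩, rfl⟩
  exact hi

lemma truncMat_sub_smul_mulVec_apply {H : Type*} [NormedAddCommGroup H] [InnerProductSpace ℝ H]
    (v : ℕ → H) (α : ℕ → ℝ) (K : ℝ → H →L[ℝ] H) (l σ : ℝ) {n : ℕ} (x : Fin n → ℝ) (i : Fin n) :
    (truncMat v α K l n - σ • 1).mulVec x i
      = (α i - σ) * x i + inner ℝ ((K l - K 0) (∑ j, x j • v j)) (v i) := by
  rw [Matrix.sub_mulVec, Pi.sub_apply, Matrix.smul_mulVec, Matrix.one_mulVec]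
  simp only [Matrix.mulVec, dotProduct, truncMat, Matrix.of_apply, Fin.val_inj, add_mul, ite_mul,
    zero_mul, sum_add_distrib, sum_ite_eq, mem_univ, if_true, map_sum, map_smul, sum_inner,
    real_inner_smul_left, Pi.smul_apply, smul_eq_mul, mul_comm (x _)]
  ring

theorem resolvent_of_truncated_general {H : Type*} [NormedAddCommGroup H]
    [InnerProductSpace ℝ H] [CompleteSpace H]
    (v : ℕ → H) (α : ℕ → ℝ) (K : ℝ → H →L[ℝ] H)
    (hON : Orthonormal ℝ v)
    (htop : Tendsto α atTop atTop)
    (hKsa : ∀ l ∈ Set.Ico (0 : ℝ) 1, IsSelfAdjoint (K l))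
    (hKbdd : ∃ C : ℝ, ∀ l ∈ Set.Ico (0 : ℝ) 1, ‖K l‖ ≤ C)
    (hKstrong : ∀ σ ∈ Set.Ico (0 : ℝ) 1, ∀ u : H,
      Tendsto (fun l => K l u) (nhdsWithin σ (Set.Ico 0 1)) (𝓝 (K σ u)))
    (σ : ℝ) (hσ : σ ∉ Set.range α) :
    ∃ N : ℕ, ∃ lstar : ℝ, 0 < lstar ∧ lstar ≤ 1 ∧
      ∀ n > N, ∀ l : ℝ, 0 < l → l < lstar →
        (truncMat v α K l n - σ • (1 : Matrix (Fin n) (Fin n) ℝ)).det ≠ 0 := by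
  obtain ⟨C, hC⟩ := hKbdd
  have h0 : (0 : ℝ) ∈ Set.Ico (0 : ℝ) 1 := ⟨le_rfl, one_pos⟩
  have hC0 : 0 ≤ C := (norm_nonneg _).trans (hC 0 h0)
  obtain ⟨N, hN⟩ := eventually_atTop.1 (htop.eventually_ge_atTop (σ + (4 * C + 1)))
  obtain ⟨δ, hδ, hδα⟩ := exists_pos_le_abs_sub_of_notMem_range hσ N
  have hK0 (u : H) : Tendsto (fun l => K l u) (𝓝[>] 0) (𝓝 (K 0 u)) :=
    (hKstrong 0 h0 u).mono_left <| (nhdsWithin_Ioo_eq_nhdsGT one_pos).symm.trans_le <|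
      nhdsWithin_mono _ Set.Ioo_subset_Ico_self
  obtain ⟨lstar, hlstar, hsmall⟩ :=
    exists_forall_Ioo_sum_norm_sq_sub_apply_le hK0 v N (by positivity : 0 < δ ^ 2 / 4)
  refine ⟨N, min lstar 1, lt_min hlstar one_pos, min_le_right _ _, fun n _ l hl0 hl => ?_⟩
  have hl1 : l ∈ Set.Ico (0 : ℝ) 1 := ⟨hl0.le, hl.trans_le (min_le_right _ _)⟩
  have hD : 2 * ‖K l - K 0‖ ≤ 4 * C + 1 := by
    linarith [norm_sub_le (K l) (K 0), hC l hl1, hC 0 h0]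
  rw [Ne, ← Matrix.exists_mulVec_eq_zero_iff]
  rintro ⟨x, hx0, hx⟩
  refine hx0 <| (hON.comp (Fin.val : Fin n → ℕ) Fin.val_injective).eq_zero_of_mul_eq_inner_sum
    (d := fun i : Fin n => σ - α i) ((hKsa l hl1).sub (hKsa 0 h0)).isSymmetric (fun i => ?_)
    (univ.filter fun i : Fin n => (i : ℕ) < N) hδ (fun i hi => hδα i (mem_filter.1 hi).2) ?_
    (by linarith) hD fun i hi => ?_
  · have h := truncMat_sub_smul_mulVec_apply v α K l σ x i
    rw [hx, Pi.zero_apply] at h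
    simp only [Function.comp_apply]
    linarith
  · exact (Fin.sum_filter_val_lt_le_sum_range fun k => sq_nonneg _).trans
      (hsmall l ⟨hl0, hl.trans_le (min_le_left _ _)⟩)
  · have hi : N ≤ (i : ℕ) := by simpa using hi
    rw [abs_sub_comm]
    exact le_abs.2 (Or.inl (by linarith [hN i hi]))

/-- Let `K^λ`, `λ ∈ [0,1)`, be bounded selfadjoint operators on `L²(𝕋^d)`,
uniformly bounded and strongly continuous in `λ`.  Set `A^λ = −Δ + K^λ`, `A = A⁰`;
`A⁰` has an orthonormal Hilbert basis of eigenvectors `v_j` with ascending eigenvalues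
`α_j → ∞` (discrete spectrum), and `A_n^λ = P_n A^λ P_n` where `P_n` projects onto the
first `n` eigenvectors of `A`.  If `σ` is in the resolvent set of `A` (i.e. `σ` is not
one of the eigenvalues `α_j`), then there exist `N > 0` and `λ* > 0` such that `σ` is
in the resolvent set of `A_n^λ` for all `n > N` and all `0 < λ < λ*`. -/
theorem resolvent_of_truncated {H : Type*} [NormedAddCommGroup H]
    [InnerProductSpace ℝ H] [CompleteSpace H]
    (v : ℕ → H) (α : ℕ → ℝ) (K : ℝ → H →L[ℝ] H)
    (hON : Orthonormal ℝ v)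
    (hcomp : (Submodule.span ℝ (Set.range v)).topologicalClosure = ⊤)
    (hmono : Monotone α) (htop : Tendsto α atTop atTop)
    (hKsa : ∀ l ∈ Set.Ico (0 : ℝ) 1, IsSelfAdjoint (K l))
    (hKbdd : ∃ C : ℝ, ∀ l ∈ Set.Ico (0 : ℝ) 1, ‖K l‖ ≤ C)
    (hKstrong : ∀ σ ∈ Set.Ico (0 : ℝ) 1, ∀ u : H,
      Tendsto (fun l => K l u) (nhdsWithin σ (Set.Ico 0 1)) (𝓝 (K σ u)))
    (σ : ℝ) (hσ : σ ∉ Set.range α) :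
    ∃ N : ℕ, ∃ lstar : ℝ, 0 < lstar ∧ lstar ≤ 1 ∧
      ∀ n > N, ∀ l : ℝ, 0 < l → l < lstar →
        (truncMat v α K l n - σ • (1 : Matrix (Fin n) (Fin n) ℝ)).det ≠ 0 :=
  resolvent_of_truncated_general v α K hON htop hKsa hKbdd hKstrong σ hσ
end

section
/- With the hypotheses of the previous statement: if there exist sequences n_k → ∞ and λ_k → 0 such that σ is an eigenvalue of A_{n_k}^{λ_k} for every k, then σ is in the spectrum of A = A⁰. -/
/-! Suppose `σ ∉ range α`. Normalising kernel vectors of `A_{n_k}^{λ_k} - σ` gives unit vectors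
`u_k ∈ span {v_i | i < n_k}` with `(α_i - σ) ⟪v_i, u_k⟫ = -⟪v_i, B_k u_k⟫` for `i < n_k`, where
`B_k = K^{λ_k} - K⁰`. As `B_k` is symmetric, `|⟪v_i, u_k⟫| ≤ ‖B_k v_i‖ / |α_i - σ|`, which tends
to `0` for each fixed `i` by strong continuity. As `α_i → ∞`, Bessel's inequality for `B_k u_k`
bounds the weight of `u_k` on the modes with `(α_i - σ)² ≥ D² + 1` by `D² / (D² + 1) < 1`, where
`D` bounds `‖B_k‖`. So the finitely many remaining modes carry weight at least `1 / (D² + 1)`,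
yet that weight tends to `0`. -/

open Filter Topology

open scoped RealInnerProductSpace Matrix
open Finset

section
variable {H : Type*} [NormedAddCommGroup H] [InnerProductSpace ℝ H]

theorem Orthonormal.sum_inner_sq_eq_norm_sq {ι : Type*} [Fintype ι] {w : ι → H}
    (hw : Orthonormal ℝ w) (c : ι → ℝ) :
    ∑ i, ⟪w i, ∑ j, c j • w j⟫ ^ 2 = ‖∑ j, c j • w j‖ ^ 2 := by
  rw [← real_inner_self_eq_norm_sq, hw.inner_sum]
  simp [hw.inner_right_fintype, sq]

theorem Orthonormal.mul_sum_inner_sq_le {ι : Type*} {w : ι → H} (hw : Orthonormal ℝ w)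
    {s : Finset ι} {a : ι → ℝ} {M : ℝ} {u x : H} (hM : ∀ i ∈ s, M ≤ a i ^ 2)
    (heq : ∀ i ∈ s, a i * ⟪w i, u⟫ = -⟪w i, x⟫) :
    M * ∑ i ∈ s, ⟪w i, u⟫ ^ 2 ≤ ‖x‖ ^ 2 :=
  calc M * ∑ i ∈ s, ⟪w i, u⟫ ^ 2 ≤ ∑ i ∈ s, (a i * ⟪w i, u⟫) ^ 2 := by
        rw [mul_sum]
        gcongr with i hi
        rw [mul_pow]
        exact mul_le_mul_of_nonneg_right (hM i hi) (sq_nonneg _)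
    _ = ∑ i ∈ s, ‖⟪w i, x⟫‖ ^ 2 :=
        sum_congr rfl fun i hi => by rw [heq i hi, Real.norm_eq_abs, sq_abs, neg_sq]
    _ ≤ ‖x‖ ^ 2 := hw.sum_inner_products_le x

theorem abs_mul_abs_inner_le_of_isSymmetric {B : H →L[ℝ] H}
    (hB : (B : H →ₗ[ℝ] H).IsSymmetric)
    {a : ℝ} {x u : H} (hu : ‖u‖ ≤ 1) (h : a * ⟪x, u⟫ = -⟪x, B u⟫) :
    |a| * |⟪x, u⟫| ≤ ‖B x‖ :=
  calc |a| * |⟪x, u⟫| = |⟪B x, u⟫| := by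
        rw [← abs_mul, h, abs_neg]
        exact congrArg abs (hB x u).symm
    _ ≤ ‖B x‖ * ‖u‖ := abs_real_inner_le_norm _ _
    _ ≤ ‖B x‖ := mul_le_of_le_one_right (norm_nonneg _) hu

theorem truncMat_sub_smul_one_mulVec_apply (v : ℕ → H) (α : ℕ → ℝ) (K : ℝ → H →L[ℝ] H)
    (l σ : ℝ) {n : ℕ} (c : Fin n → ℝ) (i : Fin n) :
    ((truncMat v α K l n - σ • (1 : Matrix (Fin n) (Fin n) ℝ)) *ᵥ c) i
      = (α i - σ) * c i + ⟪v i, (K l - K 0) (∑ j, c j • v j)⟫ := by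
  simp only [Matrix.mulVec, dotProduct, truncMat, Matrix.sub_apply, Matrix.smul_apply,
    Matrix.of_apply, Matrix.one_apply, Fin.val_inj, smul_eq_mul, add_mul, sub_mul,
    sum_add_distrib, sum_sub_distrib, ite_mul, zero_mul, mul_ite, mul_one, mul_zero,
    sum_ite_eq, mem_univ, if_true, map_sum, map_smul, inner_sum,
    real_inner_smul_right, real_inner_comm]
  rw [sum_congr rfl fun j _ => mul_comm (c j) _]
  ring

theorem exists_unit_galerkin_eigenvector {v : ℕ → H} (hv : Orthonormal ℝ v) {α : ℕ → ℝ}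
    {K : ℝ → H →L[ℝ] H} {l σ : ℝ} {n : ℕ}
    (h : (truncMat v α K l n - σ • (1 : Matrix (Fin n) (Fin n) ℝ)).det = 0) :
    ∃ u : H, ‖u‖ = 1 ∧ ∑ i ∈ range n, ⟪v i, u⟫ ^ 2 = 1 ∧
      ∀ i < n, (α i - σ) * ⟪v i, u⟫ = -⟪v i, (K l - K 0) u⟫ := by
  have hw : Orthonormal ℝ (fun j : Fin n => v j) := hv.comp _ Fin.val_injective
  obtain ⟨c, hc0, hc⟩ := Matrix.exists_mulVec_eq_zero_iff.mpr h
  set w := ∑ j, c j • v j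
  have hw0 : w ≠ 0 := fun h0 => hc0 <| funext fun j => by
    rw [Pi.zero_apply, ← hw.inner_right_fintype c j]
    exact (congrArg _ h0).trans (inner_zero_right _)
  set c' := ‖w‖⁻¹ • c
  have hu : ∑ j, c' j • v j = ‖w‖⁻¹ • w := by
    simp only [c', w, Pi.smul_apply, smul_eq_mul, smul_sum, smul_smul]
  have hnorm : ‖∑ j, c' j • v j‖ = 1 := by
    rw [hu, norm_smul, norm_inv, norm_norm, inv_mul_cancel₀ (norm_ne_zero_iff.mpr hw0)]
  refine ⟨∑ j, c' j • v j, hnorm, ?_, fun i hi => ?_⟩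
  · rw [← Fin.sum_univ_eq_sum_range (fun i => ⟪v i, _⟫ ^ 2), hw.sum_inner_sq_eq_norm_sq, hnorm,
      one_pow]
  · have hc' : ((truncMat v α K l n - σ • (1 : Matrix (Fin n) (Fin n) ℝ)) *ᵥ c') ⟨i, hi⟩ = 0 := by
      rw [Matrix.mulVec_smul, hc, smul_zero, Pi.zero_apply]
    rw [truncMat_sub_smul_one_mulVec_apply] at hc'
    have hcoef : ⟪v i, ∑ j, c' j • v j⟫ = c' ⟨i, hi⟩ := hw.inner_right_fintype c' ⟨i, hi⟩
    rw [hcoef]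
    linarith

theorem one_le_of_galerkin_eigenvector {v : ℕ → H} (hv : Orthonormal ℝ v) {α : ℕ → ℝ}
    {σ D M : ℝ} {B : H →L[ℝ] H} (hBD : ‖B‖ ≤ D) (hB : (B : H →ₗ[ℝ] H).IsSymmetric)
    {n N : ℕ} {u : H} (hu : ‖u‖ ≤ 1) (hmass : ∑ i ∈ range n, ⟪v i, u⟫ ^ 2 = 1)
    (heq : ∀ i < n, (α i - σ) * ⟪v i, u⟫ = -⟪v i, B u⟫) (hM : 0 < M)
    (hN : ∀ i, N ≤ i → M ≤ (α i - σ) ^ 2) (hσ : ∀ i < N, α i ≠ σ) :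
    1 ≤ ∑ i ∈ range N, (‖B (v i)‖ / |α i - σ|) ^ 2 + D ^ 2 / M := by
  rw [← hmass, ← sum_filter_add_sum_filter_not (range n) (· < N)]
  gcongr ?_ + ?_
  · calc ∑ i ∈ (range n).filter (· < N), ⟪v i, u⟫ ^ 2
        ≤ ∑ i ∈ (range n).filter (· < N), (‖B (v i)‖ / |α i - σ|) ^ 2 := by
          refine sum_le_sum fun i hi => ?_
          obtain ⟨hin, hiN⟩ := mem_filter.mp hi
          have hpos : 0 < |α i - σ| := abs_pos.mpr (sub_ne_zero.mpr (hσ i hiN))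
          rw [sq_le_sq, abs_div, abs_abs, abs_norm, le_div_iff₀ hpos, mul_comm]
          exact abs_mul_abs_inner_le_of_isSymmetric hB hu (heq i (mem_range.mp hin))
      _ ≤ ∑ i ∈ range N, (‖B (v i)‖ / |α i - σ|) ^ 2 :=
          sum_le_sum_of_subset_of_nonneg (fun i hi => mem_range.mpr (mem_filter.mp hi).2)
            fun _ _ _ => sq_nonneg _
  · rw [le_div_iff₀ hM, mul_comm]
    calc M * ∑ i ∈ (range n).filter (¬ · < N), ⟪v i, u⟫ ^ 2 ≤ ‖B u‖ ^ 2 :=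
          hv.mul_sum_inner_sq_le (fun i hi => hN i (not_lt.mp (mem_filter.mp hi).2))
            fun i hi => heq i (mem_range.mp (mem_filter.mp hi).1)
      _ ≤ D ^ 2 := by
          gcongr
          exact ((B.le_opNorm u).trans (mul_le_of_le_one_right (norm_nonneg _) hu)).trans hBD

theorem mem_range_of_galerkin_eigenvectors {v : ℕ → H} (hv : Orthonormal ℝ v) {α : ℕ → ℝ}
    (hα : Tendsto α atTop atTop) {σ D : ℝ} {B : ℕ → H →L[ℝ] H} (hBD : ∀ k, ‖B k‖ ≤ D)
    (hB : ∀ k, (B k : H →ₗ[ℝ] H).IsSymmetric) (hB0 : ∀ x, Tendsto (fun k => B k x) atTop (𝓝 0))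
    {n : ℕ → ℕ} {u : ℕ → H} (hu : ∀ k, ‖u k‖ ≤ 1)
    (hmass : ∀ k, ∑ i ∈ range (n k), ⟪v i, u k⟫ ^ 2 = 1)
    (heq : ∀ k, ∀ i < n k, (α i - σ) * ⟪v i, u k⟫ = -⟪v i, B k (u k)⟫) :
    σ ∈ Set.range α := by
  by_contra hσ
  obtain ⟨N, hN⟩ := (hα.eventually_ge_atTop (σ + (D ^ 2 + 1))).exists_forall_of_atTop
  have hgap : ∀ i, N ≤ i → D ^ 2 + 1 ≤ (α i - σ) ^ 2 := fun i hi => by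
    nlinarith [hN i hi, sq_nonneg D]
  have hlow : Tendsto (fun k => ∑ i ∈ range N, (‖B k (v i)‖ / |α i - σ|) ^ 2) atTop (𝓝 0) := by
    simpa using tendsto_finsetSum (range N) fun i _ =>
      ((hB0 (v i)).norm.div_const |α i - σ|).pow 2
  have hle : 1 ≤ D ^ 2 / (D ^ 2 + 1) :=
    ge_of_tendsto (by simpa using hlow.add_const (D ^ 2 / (D ^ 2 + 1))) <|
      Eventually.of_forall fun k => one_le_of_galerkin_eigenvector hv (hBD k) (hB k) (hu k)
        (hmass k) (heq k) (by positivity) hgap fun i _ hi => hσ ⟨i, hi⟩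
  rw [le_div_iff₀ (by positivity)] at hle
  linarith

end

theorem eigenvalue_limit_in_spectrum_general {H : Type*} [NormedAddCommGroup H]
    [InnerProductSpace ℝ H] [CompleteSpace H]
    (v : ℕ → H) (α : ℕ → ℝ) (K : ℝ → H →L[ℝ] H)
    (hON : Orthonormal ℝ v)
    (htop : Tendsto α atTop atTop)
    (hKsa : ∀ l ∈ Set.Ico (0 : ℝ) 1, IsSelfAdjoint (K l))
    (hKbdd : ∃ C : ℝ, ∀ l ∈ Set.Ico (0 : ℝ) 1, ‖K l‖ ≤ C)
    (hKstrong : ∀ σ ∈ Set.Ico (0 : ℝ) 1, ∀ u : H,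
      Tendsto (fun l => K l u) (nhdsWithin σ (Set.Ico 0 1)) (𝓝 (K σ u)))
    (σ : ℝ) (nk : ℕ → ℕ) (lk : ℕ → ℝ)
    (hlk : Tendsto lk atTop (𝓝 0))
    (hlk' : ∀ k, lk k ∈ Set.Ioo (0 : ℝ) 1)
    (heig : ∀ k, (truncMat v α K (lk k) (nk k)
      - σ • (1 : Matrix (Fin (nk k)) (Fin (nk k)) ℝ)).det = 0) :
    σ ∈ Set.range α := by
  obtain ⟨C, hC⟩ := hKbdd
  have h0 : (0 : ℝ) ∈ Set.Ico (0 : ℝ) 1 := ⟨le_rfl, one_pos⟩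
  have hlk_mem : ∀ k, lk k ∈ Set.Ico (0 : ℝ) 1 := fun k => Set.Ioo_subset_Ico_self (hlk' k)
  have hlk_within : Tendsto lk atTop (𝓝[Set.Ico 0 1] 0) :=
    tendsto_nhdsWithin_iff.mpr ⟨hlk, Eventually.of_forall hlk_mem⟩
  choose u hu hmass heq using fun k => exists_unit_galerkin_eigenvector hON (heig k)
  refine mem_range_of_galerkin_eigenvectors hON htop (B := fun k => K (lk k) - K 0) (D := C + C)
    (fun k => ?_) (fun k => ?_) (fun x => ?_) (fun k => (hu k).le) hmass heq
  · exact (norm_sub_le _ _).trans (add_le_add (hC _ (hlk_mem k)) (hC 0 h0))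
  · exact ((hKsa _ (hlk_mem k)).sub (hKsa 0 h0)).isSymmetric
  · simpa using ((hKstrong 0 h0 x).comp hlk_within).sub_const (K 0 x)

/-- With the hypotheses of STATEMENT 5: if there exist sequences
`n_k → ∞` and `λ_k → 0` such that `σ` is an eigenvalue of `A_{n_k}^{λ_k}` for every
`k`, then `σ` is in the spectrum of `A = A⁰` (i.e. `σ` is one of the eigenvalues
`α_j`). -/
theorem eigenvalue_limit_in_spectrum {H : Type*} [NormedAddCommGroup H]
    [InnerProductSpace ℝ H] [CompleteSpace H]
    (v : ℕ → H) (α : ℕ → ℝ) (K : ℝ → H →L[ℝ] H)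
    (hON : Orthonormal ℝ v)
    (hcomp : (Submodule.span ℝ (Set.range v)).topologicalClosure = ⊤)
    (hmono : Monotone α) (htop : Tendsto α atTop atTop)
    (hKsa : ∀ l ∈ Set.Ico (0 : ℝ) 1, IsSelfAdjoint (K l))
    (hKbdd : ∃ C : ℝ, ∀ l ∈ Set.Ico (0 : ℝ) 1, ‖K l‖ ≤ C)
    (hKstrong : ∀ σ ∈ Set.Ico (0 : ℝ) 1, ∀ u : H,
      Tendsto (fun l => K l u) (nhdsWithin σ (Set.Ico 0 1)) (𝓝 (K σ u)))
    (σ : ℝ) (nk : ℕ → ℕ) (lk : ℕ → ℝ)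
    (hnk : Tendsto nk atTop atTop) (hlk : Tendsto lk atTop (𝓝 0))
    (hlk' : ∀ k, lk k ∈ Set.Ioo (0 : ℝ) 1)
    (heig : ∀ k, (truncMat v α K (lk k) (nk k)
      - σ • (1 : Matrix (Fin (nk k)) (Fin (nk k)) ℝ)).det = 0) :
    σ ∈ Set.range α :=
  eigenvalue_limit_in_spectrum_general v α K hON htop hKsa hKbdd hKstrong σ nk lk hlk hlk' heig
end

section
/- With the same hypotheses: suppose 0 is in the spectrum of A = A⁰ and neg(A) ≥ 1. Then there exist λ* > 0 and N such that for all 0 < λ < λ* and all n > N, neg(A_n^λ) ≥ neg(A_n). -/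
open Filter Topology

/-!
Let `m` be the number of negative `α j`; it is finite because `α` is monotone and takes the
value `0`. At `λ = 0` the truncated matrix is `diagonal α`, which has at most `m` negative
eigenvalues. For `n ≥ m`, the quadratic form of `A_n^λ` on the span of the first `m` coordinate
vectors is at most `∑ (α i + δ λ) x_i²` with `δ λ = ∑_{j<m} ‖(K λ - K 0) v_j‖`, and `δ λ → 0` by
strong continuity of `K` at `0`. So for small `λ > 0` the form is negative definite on an
`m`-dimensional subspace, and by the min-max principle `A_n^λ` has at least `m` negative
eigenvalues.
-/

open Module Submodule Matrix Finset
open scoped InnerProductSpace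

theorem OrthonormalBasis.repr_eq_zero_of_mem_span_image {ι 𝕜 E : Type*} [Fintype ι] [RCLike 𝕜]
    [NormedAddCommGroup E] [InnerProductSpace 𝕜 E] (b : OrthonormalBasis ι 𝕜 E) {s : Set ι}
    {x : E} (hx : x ∈ span 𝕜 (b '' s)) {i : ι} (hi : i ∉ s) : b.repr x i = 0 := by
  rw [← b.coe_toBasis, b.toBasis.mem_span_image] at hx
  simpa [b.coe_toBasis_repr_apply] using fun h => hi (hx h)

theorem Orthonormal.finrank_span_image {ι 𝕜 E : Type*} [RCLike 𝕜]
    [NormedAddCommGroup E] [InnerProductSpace 𝕜 E] {v : ι → E} (hv : Orthonormal 𝕜 v)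
    (s : Finset ι) : finrank 𝕜 (span 𝕜 (v '' s)) = #s := by
  rw [Set.image_eq_range]
  exact (finrank_span_eq_card (hv.comp _ Subtype.val_injective).linearIndependent).trans (by simp)

namespace Matrix.IsHermitian

variable {ι : Type*} [Fintype ι] [DecidableEq ι] {M : Matrix ι ι ℝ} (hM : M.IsHermitian)

theorem toEuclideanLin_eigenvectorBasis (i : ι) :
    toEuclideanLin M (hM.eigenvectorBasis i) = hM.eigenvalues i • hM.eigenvectorBasis i := by
  ext k
  simpa using congrFun (hM.mulVec_eigenvectorBasis i) k

theorem inner_toEuclideanLin_self_eq_sum (x : EuclideanSpace ℝ ι) :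
    ⟪toEuclideanLin M x, x⟫_ℝ = ∑ i, hM.eigenvalues i * hM.eigenvectorBasis.repr x i ^ 2 := by
  conv_lhs => rw [← hM.eigenvectorBasis.sum_repr x]
  simp only [map_sum, map_smul, hM.toEuclideanLin_eigenvectorBasis, smul_smul,
    hM.eigenvectorBasis.orthonormal.inner_sum]
  exact Finset.sum_congr rfl fun i _ => by rw [conj_trivial]; ring

theorem inner_toEuclideanLin_self_nonneg_of_mem_span {x : EuclideanSpace ℝ ι}
    (hx : x ∈ span ℝ (hM.eigenvectorBasis '' {i | 0 ≤ hM.eigenvalues i})) :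
    0 ≤ ⟪toEuclideanLin M x, x⟫_ℝ := by
  rw [hM.inner_toEuclideanLin_self_eq_sum]
  refine Finset.sum_nonneg fun i _ => ?_
  by_cases hi : 0 ≤ hM.eigenvalues i
  · positivity
  · simp [hM.eigenvectorBasis.repr_eq_zero_of_mem_span_image hx hi]

theorem finrank_le_card_eigenvalues_neg (U : Submodule ℝ (EuclideanSpace ℝ ι))
    (hU : ∀ x ∈ U, x ≠ 0 → ⟪toEuclideanLin M x, x⟫_ℝ < 0) :
    finrank ℝ U ≤ #{i | hM.eigenvalues i < 0} := by
  set P := span ℝ (hM.eigenvectorBasis '' {i | 0 ≤ hM.eigenvalues i})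
  have hP : finrank ℝ P = #{i | 0 ≤ hM.eigenvalues i} := by
    rw [← hM.eigenvectorBasis.orthonormal.finrank_span_image, coe_filter_univ]
  have hUP : U ⊓ P = ⊥ := (Submodule.eq_bot_iff _).2 fun x hx => by
    by_contra hx0
    exact (hU x hx.1 hx0).not_ge (hM.inner_toEuclideanLin_self_nonneg_of_mem_span hx.2)
  have hdim := Submodule.finrank_sup_add_finrank_inf_eq U P
  have hsup := (U ⊔ P).finrank_le
  have hcard := card_filter_add_card_filter_not (s := univ) fun i => hM.eigenvalues i < 0
  simp only [not_lt, card_univ] at hcard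
  rw [hUP, finrank_bot, hP] at hdim
  rw [finrank_euclideanSpace] at hsup
  omega

theorem card_filter_eigenvalues_of_eq_diagonal {d : ι → ℝ} (hd : M = diagonal d)
    (p : ℝ → Prop) [DecidablePred p] :
    #{i | p (hM.eigenvalues i)} = #{i | p (d i)} := by
  subst hd
  have hroots := hM.roots_charpoly_eq_eigenvalues
  rw [charpoly_diagonal, Polynomial.roots_prod _ _ (by
      simp [Finset.prod_ne_zero_iff, Polynomial.X_sub_C_ne_zero])] at hroots
  have := congrArg (Multiset.countP p) hroots
  simpa [Multiset.countP_map, Finset.card_def] using this.symm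

end Matrix.IsHermitian

theorem Matrix.inner_toEuclideanLin_self_eq_dotProduct {ι : Type*} [Fintype ι] [DecidableEq ι]
    (M : Matrix ι ι ℝ) (x : EuclideanSpace ℝ ι) : ⟪toEuclideanLin M x, x⟫_ℝ = x ⬝ᵥ (M *ᵥ x) := by
  simp [EuclideanSpace.inner_eq_star_dotProduct]

section Perturbation

variable {ι H : Type*} [Fintype ι] [NormedAddCommGroup H] [InnerProductSpace ℝ H]

theorem dotProduct_mulVec_of_inner (D : H →L[ℝ] H) (w : ι → H) (x : ι → ℝ) :
    x ⬝ᵥ (of (fun i j => ⟪D (w j), w i⟫_ℝ) *ᵥ x) = ⟪D (∑ j, x j • w j), ∑ i, x i • w i⟫_ℝ := by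
  simp only [map_sum, map_smul, sum_inner, inner_sum, real_inner_smul_left, real_inner_smul_right,
    dotProduct, mulVec, of_apply, Finset.mul_sum]
  exact Finset.sum_congr rfl fun i _ => Finset.sum_congr rfl fun j _ => by ring

theorem Orthonormal.norm_sum_smul {w : ι → H} (hw : Orthonormal ℝ w) (x : EuclideanSpace ℝ ι) :
    ‖∑ i, x i • w i‖ = ‖x‖ := by
  rw [← sq_eq_sq₀ (norm_nonneg _) (norm_nonneg _), ← real_inner_self_eq_norm_sq,
    ← real_inner_self_eq_norm_sq, hw.inner_sum, EuclideanSpace.inner_eq_star_dotProduct]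
  simp [dotProduct]

theorem Orthonormal.inner_map_sum_smul_le {w : ι → H} (hw : Orthonormal ℝ w) (D : H →L[ℝ] H)
    (x : EuclideanSpace ℝ ι) (s : Finset ι) (hx : ∀ i ∉ s, x i = 0) :
    ⟪D (∑ i, x i • w i), ∑ i, x i • w i⟫_ℝ ≤ (∑ i ∈ s, ‖D (w i)‖) * ‖x‖ ^ 2 := by
  have hDu : ‖D (∑ i, x i • w i)‖ ≤ (∑ i ∈ s, ‖D (w i)‖) * ‖x‖ := calc
    ‖D (∑ i, x i • w i)‖ ≤ ∑ i, ‖x i‖ * ‖D (w i)‖ := by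
      rw [map_sum]
      exact (norm_sum_le _ _).trans_eq (by simp only [map_smul, norm_smul])
    _ = ∑ i ∈ s, ‖x i‖ * ‖D (w i)‖ :=
      (Finset.sum_subset (subset_univ s) fun i _ hi => by simp [hx i hi]).symm
    _ ≤ ∑ i ∈ s, ‖x‖ * ‖D (w i)‖ := by gcongr with i; exact PiLp.norm_apply_le x i
    _ = (∑ i ∈ s, ‖D (w i)‖) * ‖x‖ := by rw [← Finset.mul_sum, mul_comm]
  calc ⟪D (∑ i, x i • w i), ∑ i, x i • w i⟫_ℝ
      ≤ ‖D (∑ i, x i • w i)‖ * ‖∑ i, x i • w i‖ := real_inner_le_norm _ _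
    _ ≤ (∑ i ∈ s, ‖D (w i)‖) * ‖x‖ * ‖x‖ := by rw [hw.norm_sum_smul]; gcongr
    _ = (∑ i ∈ s, ‖D (w i)‖) * ‖x‖ ^ 2 := by ring

end Perturbation

theorem Monotone.exists_lt_iff_lt {β : Type*} [LinearOrder β] {f : ℕ → β} (hf : Monotone f)
    {c : β} (hc : ∃ k, c ≤ f k) : ∃ m, ∀ i, f i < c ↔ i < m := by
  classical
  refine ⟨Nat.find hc, fun i => ⟨fun hi => ?_, fun hi => not_le.1 (Nat.find_min hc hi)⟩⟩
  by_contra! hle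
  exact hi.not_ge ((Nat.find_spec hc).trans (hf hle))

theorem Fin.sum_filter_val_lt_le_sum_range_s8 {M : Type*} [AddCommMonoid M] [PartialOrder M]
    [IsOrderedAddMonoid M] {n m : ℕ} (f : ℕ → M) (hf : ∀ j, 0 ≤ f j) :
    ∑ i ∈ ({i | (i : ℕ) < m} : Finset (Fin n)), f i ≤ ∑ j ∈ range m, f j := by
  refine (Finset.sum_map _ Fin.valEmbedding f).symm.trans_le ?_
  refine Finset.sum_le_sum_of_subset_of_nonneg (fun j hj => ?_) fun j _ _ => hf j
  obtain ⟨i, hi, rfl⟩ := Finset.mem_map.1 hj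
  simpa using hi

theorem Finset.sum_mul_sq_neg {ι : Type*} [Fintype ι] {c x : ι → ℝ} (hx : x ≠ 0)
    (hc : ∀ i, x i ≠ 0 → c i < 0) : ∑ i, c i * x i ^ 2 < 0 := by
  obtain ⟨i₀, hi₀⟩ := Function.ne_iff.1 hx
  refine Finset.sum_neg' (fun i _ => ?_) ⟨i₀, mem_univ _, ?_⟩
  · by_cases hi : x i = 0
    · simp [hi]
    · exact mul_nonpos_of_nonpos_of_nonneg (hc i hi).le (sq_nonneg _)
  · exact mul_neg_of_neg_of_pos (hc i₀ hi₀) (sq_pos_of_ne_zero hi₀)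

section truncMat

variable {H : Type*} [NormedAddCommGroup H] [InnerProductSpace ℝ H]
  {v : ℕ → H} {α : ℕ → ℝ} {K : ℝ → H →L[ℝ] H} {l : ℝ} {m n : ℕ}

theorem truncMat_eq :
    truncMat v α K l n =
      diagonal (fun i : Fin n => α i) + of fun i j : Fin n => ⟪(K l - K 0) (v j), v i⟫_ℝ := by
  ext i j
  simp [truncMat, diagonal_apply, Fin.val_inj]

theorem truncMat_zero : truncMat v α K 0 n = diagonal fun i : Fin n => α i := by
  ext i j
  simp [truncMat, diagonal_apply, Fin.val_inj]

theorem inner_toEuclideanLin_truncMat (x : EuclideanSpace ℝ (Fin n)) :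
    ⟪toEuclideanLin (truncMat v α K l n) x, x⟫_ℝ
      = ∑ i : Fin n, α i * x i ^ 2
        + ⟪(K l - K 0) (∑ i : Fin n, x i • v i), ∑ i : Fin n, x i • v i⟫_ℝ := by
  rw [inner_toEuclideanLin_self_eq_dotProduct, truncMat_eq, add_mulVec, dotProduct_add,
    dotProduct_mulVec_of_inner]
  simp [dotProduct, mulVec_diagonal, sq, mul_left_comm]

theorem inner_toEuclideanLin_truncMat_neg (hON : Orthonormal ℝ v)
    (hα : ∀ i < m, α i + ∑ j ∈ range m, ‖(K l - K 0) (v j)‖ < 0)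
    {x : EuclideanSpace ℝ (Fin n)} (hx : ∀ i : Fin n, m ≤ i → x i = 0) (hx0 : x ≠ 0) :
    ⟪toEuclideanLin (truncMat v α K l n) x, x⟫_ℝ < 0 := by
  set δ := ∑ j ∈ range m, ‖(K l - K 0) (v j)‖
  have hpert := (hON.comp _ Fin.val_injective).inner_map_sum_smul_le (K l - K 0) x
    {i | (i : ℕ) < m} fun i hi => hx i (by simpa using hi)
  have hδ : ∑ i ∈ ({i | (i : ℕ) < m} : Finset (Fin n)), ‖(K l - K 0) (v i)‖ ≤ δ :=
    Fin.sum_filter_val_lt_le_sum_range_s8 (fun j => ‖(K l - K 0) (v j)‖) fun _ => norm_nonneg _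
  calc ⟪toEuclideanLin (truncMat v α K l n) x, x⟫_ℝ
      ≤ ∑ i : Fin n, α i * x i ^ 2 + δ * ‖x‖ ^ 2 := by
        rw [inner_toEuclideanLin_truncMat]
        gcongr
        exact hpert.trans (mul_le_mul_of_nonneg_right hδ (sq_nonneg _))
    _ = ∑ i : Fin n, (α i + δ) * x i ^ 2 := by
        simp [EuclideanSpace.norm_sq_eq, add_mul, Finset.sum_add_distrib, Finset.mul_sum]
    _ < 0 := Finset.sum_mul_sq_neg (by simpa using hx0) fun i hi =>
        hα i (not_le.1 fun h => hi (hx i h))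

theorem le_card_eigenvalues_truncMat_neg (hON : Orthonormal ℝ v)
    (hM : (truncMat v α K l n).IsHermitian) (hmn : m ≤ n)
    (hα : ∀ i < m, α i + ∑ j ∈ range m, ‖(K l - K 0) (v j)‖ < 0) :
    m ≤ #{i | hM.eigenvalues i < 0} := by
  set U := span ℝ (EuclideanSpace.basisFun (Fin n) ℝ '' {i | (i : ℕ) < m})
  have hU : finrank ℝ U = m := by
    rw [← min_eq_right hmn, ← Fin.card_filter_val_lt,
      ← (EuclideanSpace.basisFun (Fin n) ℝ).orthonormal.finrank_span_image, coe_filter_univ]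
  refine hU ▸ hM.finrank_le_card_eigenvalues_neg U fun x hxU hx0 =>
    inner_toEuclideanLin_truncMat_neg hON hα (fun i hi => ?_) hx0
  simpa using (EuclideanSpace.basisFun (Fin n) ℝ).repr_eq_zero_of_mem_span_image hxU
    (i := i) (by simpa using hi)

theorem card_eigenvalues_truncMat_zero_neg_le (hM : (truncMat v α K 0 n).IsHermitian)
    (hα : ∀ i, α i < 0 → i < m) : #{i | hM.eigenvalues i < 0} ≤ m := by
  rw [hM.card_filter_eigenvalues_of_eq_diagonal truncMat_zero (· < 0)]
  calc #{i : Fin n | α i < 0} ≤ #{i : Fin n | (i : ℕ) < m} :=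
        card_le_card fun i => by simpa using hα i
    _ ≤ m := Fin.card_filter_val_lt.trans_le (min_le_right _ _)

end truncMat

theorem neg_count_lower_bound_general {H : Type*} [NormedAddCommGroup H]
    [InnerProductSpace ℝ H]
    (v : ℕ → H) (α : ℕ → ℝ) (K : ℝ → H →L[ℝ] H)
    (hON : Orthonormal ℝ v)
    (hmono : Monotone α)
    (hKstrong : ∀ σ ∈ Set.Ico (0 : ℝ) 1, ∀ u : H,
      Tendsto (fun l => K l u) (nhdsWithin σ (Set.Ico 0 1)) (𝓝 (K σ u)))
    (hH : ∀ l n, (truncMat v α K l n).IsHermitian)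
    (h0 : (0 : ℝ) ∈ Set.range α) :
    ∃ lstar : ℝ, 0 < lstar ∧ lstar ≤ 1 ∧ ∃ N : ℕ,
      ∀ l : ℝ, 0 < l → l < lstar → ∀ n > N,
        (Finset.univ.filter fun i => (hH 0 n).eigenvalues i < 0).card
          ≤ (Finset.univ.filter fun i => (hH l n).eigenvalues i < 0).card := by
  obtain ⟨m, hm⟩ := hmono.exists_lt_iff_lt (h0.imp fun _ h => h.ge)
  have hδ : Tendsto (fun l => ∑ j ∈ range m, ‖(K l - K 0) (v j)‖) (𝓝[≥] 0) (𝓝 0) := by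
    rw [← nhdsWithin_Ico_eq_nhdsGE one_pos]
    simpa using tendsto_finsetSum (range m) fun j _ =>
      tendsto_iff_norm_sub_tendsto_zero.1 (hKstrong 0 ⟨le_rfl, one_pos⟩ (v j))
  have hsmall : ∀ᶠ l in 𝓝[≥] 0, ∀ i < m, α i + ∑ j ∈ range m, ‖(K l - K 0) (v j)‖ < 0 := by
    have := (eventually_all_finset (range m)).2 fun i hi =>
      hδ.eventually_lt_const (neg_pos.2 ((hm i).2 (mem_range.1 hi)))
    filter_upwards [this] with l hl i hi
    linarith [hl i (mem_range.2 hi)]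
  obtain ⟨u, hu, hIco⟩ := mem_nhdsGE_iff_exists_Ico_subset.1 hsmall
  refine ⟨min u 1, lt_min hu one_pos, min_le_right _ _, m, fun l hl0 hl n hn => ?_⟩
  calc _ ≤ m := card_eigenvalues_truncMat_zero_neg_le (hH 0 n) fun i => (hm i).1
    _ ≤ _ := le_card_eigenvalues_truncMat_neg hON (hH l n) hn.le
          (hIco ⟨hl0.le, hl.trans_le (min_le_left _ _)⟩)

/-- With the hypotheses of STATEMENT 5: if `0` is in the spectrum of
`A = A⁰` (i.e. `0` is one of the eigenvalues `α_j`) and `neg(A) ≥ 1`, then there exist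
`λ* > 0` and `N` such that for all `0 < λ < λ*` and all `n > N`,
`neg(A_n^λ) ≥ neg(A_n)`. -/
theorem neg_count_lower_bound {H : Type*} [NormedAddCommGroup H]
    [InnerProductSpace ℝ H] [CompleteSpace H]
    (v : ℕ → H) (α : ℕ → ℝ) (K : ℝ → H →L[ℝ] H)
    (hON : Orthonormal ℝ v)
    (hcomp : (Submodule.span ℝ (Set.range v)).topologicalClosure = ⊤)
    (hmono : Monotone α) (htop : Tendsto α atTop atTop)
    (hKsa : ∀ l ∈ Set.Ico (0 : ℝ) 1, IsSelfAdjoint (K l))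
    (hKbdd : ∃ C : ℝ, ∀ l ∈ Set.Ico (0 : ℝ) 1, ‖K l‖ ≤ C)
    (hKstrong : ∀ σ ∈ Set.Ico (0 : ℝ) 1, ∀ u : H,
      Tendsto (fun l => K l u) (nhdsWithin σ (Set.Ico 0 1)) (𝓝 (K σ u)))
    (hH : ∀ l n, (truncMat v α K l n).IsHermitian)
    (h0 : (0 : ℝ) ∈ Set.range α) (hneg : ∃ j, α j < 0) :
    ∃ lstar : ℝ, 0 < lstar ∧ lstar ≤ 1 ∧ ∃ N : ℕ,
      ∀ l : ℝ, 0 < l → l < lstar → ∀ n > N,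
        (Finset.univ.filter fun i => (hH 0 n).eigenvalues i < 0).card
          ≤ (Finset.univ.filter fun i => (hH l n).eigenvalues i < 0).card :=
  neg_count_lower_bound_general v α K hON hmono hKstrong hH h0
end
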